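/- Let ℍ^+ = {ξ : ⟨ξ,ν⟩ > d}, δ(ξ) = ⟨ξ,ν⟩ − d, p ≥ 2, α = p*(1−1/p)² + 1 − 1/p with p* = Qp/(Q−p), Q = 2n+2. For u ∈ C_0^∞(ℍ^+) and v = δ^{-(p-1)/p} u, the integrals I₁ = ∫_{ℍ^+} |u|^{p*(1−1/p)} δ^{(p−1)/p} |∇_H v| dξ and I₂ = ∫_{ℍ^+} δ^{α−1} |∇_H δ| |v|^{αp/(p−1)} dξ satisfy I₂ ≤ (p/(p−1)) I₁. -/

import Mathlib

open MeasureTheory Real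

noncomputable section

abbrev H (n : ℕ) := (Fin n → ℝ) × (Fin n → ℝ) × ℝ

/-- Coefficient vector of the left-invariant field `X_i` at `ξ`. -/
def Xv (n : ℕ) (i : Fin n) (ξ : H n) : H n := (Pi.single i 1, 0, 2 * ξ.2.1 i)

/-- Coefficient vector of the left-invariant field `Y_i` at `ξ`. -/
def Yv (n : ℕ) (i : Fin n) (ξ : H n) : H n := (0, Pi.single i 1, -(2 * ξ.1 i))

/-- The derivative `X_i f`. -/
def XD (n : ℕ) (i : Fin n) (f : H n → ℝ) (ξ : H n) : ℝ := fderiv ℝ f ξ (Xv n i ξ)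

/-- The derivative `Y_i f`. -/
def YD (n : ℕ) (i : Fin n) (f : H n → ℝ) (ξ : H n) : ℝ := fderiv ℝ f ξ (Yv n i ξ)

/-- Euclidean norm of the horizontal gradient. -/
def hNorm (n : ℕ) (f : H n → ℝ) (ξ : H n) : ℝ :=
  Real.sqrt (∑ i, ((XD n i f ξ) ^ 2 + (YD n i f ξ) ^ 2))

/-- Euclidean inner product on `ℝ^{2n+1}`. -/
def iprod (n : ℕ) (a b : H n) : ℝ :=
  (∑ i, a.1 i * b.1 i) + (∑ i, a.2.1 i * b.2.1 i) + a.2.2 * b.2.2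

open Filter Topology

namespace HeisenAux

variable {n : ℕ}

def e1 (n : ℕ) (i : Fin n) : H n := (Pi.single i 1, 0, 0)
def e2 (n : ℕ) (i : Fin n) : H n := (0, Pi.single i 1, 0)
def e3 (n : ℕ) : H n := (0, 0, 1)

def pxc (n : ℕ) (i : Fin n) : H n →L[ℝ] ℝ :=
  (ContinuousLinearMap.proj i).comp (ContinuousLinearMap.fst ℝ (Fin n → ℝ) ((Fin n → ℝ) × ℝ))
def pyc (n : ℕ) (i : Fin n) : H n →L[ℝ] ℝ :=
  ((ContinuousLinearMap.proj i).comp (ContinuousLinearMap.fst ℝ (Fin n → ℝ) ℝ)).comp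
    (ContinuousLinearMap.snd ℝ (Fin n → ℝ) ((Fin n → ℝ) × ℝ))
def ptc (n : ℕ) : H n →L[ℝ] ℝ :=
  (ContinuousLinearMap.snd ℝ (Fin n → ℝ) ℝ).comp
    (ContinuousLinearMap.snd ℝ (Fin n → ℝ) ((Fin n → ℝ) × ℝ))

@[simp] lemma pxc_apply (i : Fin n) (w : H n) : pxc n i w = w.1 i := rfl
@[simp] lemma pyc_apply (i : Fin n) (w : H n) : pyc n i w = w.2.1 i := rfl
@[simp] lemma ptc_apply (w : H n) : ptc n w = w.2.2 := rfl

def lν (n : ℕ) (ν : H n) : H n →L[ℝ] ℝ :=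
  (∑ i, ν.1 i • pxc n i) + ((∑ i, ν.2.1 i • pyc n i) + ν.2.2 • ptc n)

lemma lν_apply (ν : H n) (w : H n) : lν n ν w = iprod n w ν := by
  simp only [lν, ContinuousLinearMap.add_apply, ContinuousLinearMap.sum_apply,
    ContinuousLinearMap.smul_apply, pxc_apply, pyc_apply, ptc_apply, smul_eq_mul, iprod]
  rw [Finset.sum_congr rfl (fun i _ => mul_comm (ν.1 i) (w.1 i)),
    Finset.sum_congr rfl (fun i _ => mul_comm (ν.2.1 i) (w.2.1 i)), mul_comm ν.2.2 w.2.2]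
  ring

def af (n : ℕ) (ν : H n) (i : Fin n) (ξ : H n) : ℝ := ν.1 i + 2 * ξ.2.1 i * ν.2.2
def bf (n : ℕ) (ν : H n) (i : Fin n) (ξ : H n) : ℝ := ν.2.1 i - 2 * ξ.1 i * ν.2.2
def Ztf (n : ℕ) (ν : H n) (ξ : H n) : ℝ :=
  ∑ i, (2 * ξ.2.1 i * af n ν i ξ - 2 * ξ.1 i * bf n ν i ξ)
def Zf (n : ℕ) (ν : H n) (ξ : H n) : H n :=
  (fun i => af n ν i ξ, fun i => bf n ν i ξ, Ztf n ν ξ)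
def Nsq (n : ℕ) (ν : H n) (ξ : H n) : ℝ := ∑ i, ((af n ν i ξ) ^ 2 + (bf n ν i ξ) ^ 2)

lemma Nsq_nonneg (ν : H n) (ξ : H n) : 0 ≤ Nsq n ν ξ :=
  Finset.sum_nonneg fun i _ => by positivity

lemma iprod_Xv (ν : H n) (i : Fin n) (ξ : H n) : iprod n (Xv n i ξ) ν = af n ν i ξ := by
  simp [iprod, Xv, af, Pi.single_apply, Finset.sum_ite_eq]

lemma iprod_Yv (ν : H n) (i : Fin n) (ξ : H n) : iprod n (Yv n i ξ) ν = bf n ν i ξ := by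
  simp [iprod, Yv, bf, Pi.single_apply, Finset.sum_ite_eq]
  ring

/-- decomposition of a vector in the product space as a sum of basis vectors -/
lemma vec_decomp (w : H n) :
    w = (∑ i, w.1 i • e1 n i) + ((∑ i, w.2.1 i • e2 n i) + w.2.2 • e3 n) := by
  have h1 : ∀ (c : Fin n → ℝ), (∑ i, c i • (Pi.single i (1:ℝ) : Fin n → ℝ)) = c := by
    intro c; funext j
    simp [Finset.sum_apply, Pi.single_apply, Finset.sum_ite_eq, mul_ite]
  refine Prod.ext ?_ (Prod.ext ?_ ?_)
  · simpa [e1, e2, e3, Prod.fst_sum] using (h1 w.1).symm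
  · simpa [e1, e2, e3, Prod.fst_sum, Prod.snd_sum] using (h1 w.2.1).symm
  · simp [e1, e2, e3, Prod.snd_sum]

lemma clm_decomp (L : H n →L[ℝ] ℝ) (w : H n) :
    L w = (∑ i, w.1 i * L (e1 n i)) + ((∑ i, w.2.1 i * L (e2 n i)) + w.2.2 * L (e3 n)) := by
  conv_lhs => rw [vec_decomp w]
  simp [map_sum]

/-- `Z` as combination of the `Xv`, `Yv`. -/
lemma Zf_decomp (ν : H n) (ξ : H n) :
    Zf n ν ξ = (∑ i, af n ν i ξ • Xv n i ξ) + ∑ i, bf n ν i ξ • Yv n i ξ := by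
  have h1 : ∀ (c : Fin n → ℝ), (∑ i, c i • (Pi.single i (1:ℝ) : Fin n → ℝ)) = c := by
    intro c; funext j
    simp [Finset.sum_apply, Pi.single_apply, Finset.sum_ite_eq, mul_ite]
  refine Prod.ext ?_ (Prod.ext ?_ ?_)
  · simpa [Zf, Xv, Yv, Prod.fst_sum, Pi.smul_def] using (h1 fun i => af n ν i ξ).symm
  · simpa [Zf, Xv, Yv, Prod.fst_sum, Prod.snd_sum, Pi.smul_def] using
      (h1 fun i => bf n ν i ξ).symm
  · simp [Zf, Xv, Yv, Prod.fst_sum, Prod.snd_sum, Ztf, smul_eq_mul, Finset.sum_sub_distrib]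
    congr 1 <;> exact Finset.sum_congr rfl fun i _ => by ring

lemma clm_Zf (L : H n →L[ℝ] ℝ) (ν : H n) (ξ : H n) :
    L (Zf n ν ξ) = (∑ i, af n ν i ξ * L (Xv n i ξ)) + ∑ i, bf n ν i ξ * L (Yv n i ξ) := by
  rw [Zf_decomp]; simp [map_sum]

lemma lν_Zf (ν : H n) (ξ : H n) : lν n ν (Zf n ν ξ) = Nsq n ν ξ := by
  rw [clm_Zf, Nsq, Finset.sum_add_distrib]
  congr 1 <;> exact Finset.sum_congr rfl fun i _ => by
    rw [lν_apply]; first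
      | rw [iprod_Xv]; ring
      | rw [iprod_Yv]; ring

end HeisenAux

namespace HeisenAux

variable {n : ℕ}

lemma hasFDerivAt_af (ν : H n) (i : Fin n) (ξ : H n) :
    HasFDerivAt (af n ν i) ((2 * ν.2.2) • pyc n i) ξ := by
  have : af n ν i = fun ξ : H n => ν.1 i + (2 * ν.2.2) * pyc n i ξ := by
    funext ζ; simp [af]; ring
  rw [this]
  exact ((pyc n i).hasFDerivAt.const_mul _).const_add _

lemma hasFDerivAt_bf (ν : H n) (i : Fin n) (ξ : H n) :
    HasFDerivAt (bf n ν i) ((-(2 * ν.2.2)) • pxc n i) ξ := by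
  have : bf n ν i = fun ξ : H n => ν.2.1 i + (-(2 * ν.2.2)) * pxc n i ξ := by
    funext ζ; simp [bf]; ring
  rw [this]
  exact ((pxc n i).hasFDerivAt.const_mul _).const_add _

lemma hasFDerivAt_delta (ν : H n) (d : ℝ) (ξ : H n) :
    HasFDerivAt (fun ζ => iprod n ζ ν - d) (lν n ν) ξ := by
  have : (fun ζ => iprod n ζ ν - d) = fun ζ : H n => lν n ν ζ - d := by
    funext ζ; rw [lν_apply]
  rw [this]
  exact (lν n ν).hasFDerivAt.sub_const d

lemma fderiv_delta (ν : H n) (d : ℝ) (ξ : H n) :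
    fderiv ℝ (fun ζ => iprod n ζ ν - d) ξ = lν n ν :=
  (hasFDerivAt_delta ν d ξ).fderiv

lemma hNorm_delta (ν : H n) (d : ℝ) (ξ : H n) :
    hNorm n (fun ζ => iprod n ζ ν - d) ξ = Real.sqrt (Nsq n ν ξ) := by
  unfold hNorm XD YD
  rw [fderiv_delta]
  congr 1
  exact Finset.sum_congr rfl fun i _ => by
    rw [lν_apply, lν_apply, iprod_Xv, iprod_Yv]

def DNsq (n : ℕ) (ν : H n) (ξ : H n) : H n →L[ℝ] ℝ :=
  ∑ i, ((af n ν i ξ • ((2 * ν.2.2) • pyc n i) + af n ν i ξ • ((2 * ν.2.2) • pyc n i))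
      + (bf n ν i ξ • ((-(2 * ν.2.2)) • pxc n i) + bf n ν i ξ • ((-(2 * ν.2.2)) • pxc n i)))

lemma hasFDerivAt_Nsq (ν : H n) (ξ : H n) :
    HasFDerivAt (Nsq n ν) (DNsq n ν ξ) ξ := by
  have : Nsq n ν = fun ζ => ∑ i, ((af n ν i ζ) * (af n ν i ζ) + (bf n ν i ζ) * (bf n ν i ζ)) := by
    funext ζ; exact Finset.sum_congr rfl fun i _ => by ring
  rw [this]
  exact HasFDerivAt.fun_sum fun i _ =>
    (((hasFDerivAt_af ν i ξ).mul (hasFDerivAt_af ν i ξ))).add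
      ((hasFDerivAt_bf ν i ξ).mul (hasFDerivAt_bf ν i ξ))

lemma DNsq_Zf (ν : H n) (ξ : H n) : DNsq n ν ξ (Zf n ν ξ) = 0 := by
  unfold DNsq
  rw [ContinuousLinearMap.sum_apply]
  refine Finset.sum_eq_zero fun i _ => ?_
  simp [Zf, smul_eq_mul]
  ring

lemma fderiv_af_e1 (ν : H n) (i : Fin n) (ξ : H n) :
    fderiv ℝ (af n ν i) ξ (e1 n i) = 0 := by
  rw [(hasFDerivAt_af ν i ξ).fderiv]; simp [e1]

lemma fderiv_bf_e2 (ν : H n) (i : Fin n) (ξ : H n) :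
    fderiv ℝ (bf n ν i) ξ (e2 n i) = 0 := by
  rw [(hasFDerivAt_bf ν i ξ).fderiv]; simp [e2]

/-- continuity of all the polynomial data -/
lemma continuous_af (ν : H n) (i : Fin n) : Continuous (af n ν i) := by
  unfold af; fun_prop

lemma continuous_bf (ν : H n) (i : Fin n) : Continuous (bf n ν i) := by
  unfold bf; fun_prop

lemma continuous_Nsq (ν : H n) : Continuous (Nsq n ν) := by
  unfold Nsq
  exact continuous_finset_sum _ fun i _ =>
    (((continuous_af ν i).pow 2).add ((continuous_bf ν i).pow 2))

lemma continuous_Ztf (ν : H n) : Continuous (Ztf n ν) := by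
  unfold Ztf
  refine continuous_finset_sum _ fun i _ => Continuous.sub ?_ ?_
  · exact (by fun_prop : Continuous fun ξ : H n => 2 * ξ.2.1 i).mul (continuous_af ν i)
  · exact (by fun_prop : Continuous fun ξ : H n => 2 * ξ.1 i).mul (continuous_bf ν i)

lemma continuous_Zf (ν : H n) : Continuous (Zf n ν) := by
  unfold Zf
  refine Continuous.prodMk ?_ (Continuous.prodMk ?_ (continuous_Ztf ν))
  · exact continuous_pi fun i => continuous_af ν i
  · exact continuous_pi fun i => continuous_bf ν i

/-- derivative of `Ztf` in the `t` direction is zero. -/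
lemma hasFDerivAt_Ztf (ν : H n) (ξ : H n) :
    ∃ D : H n →L[ℝ] ℝ, HasFDerivAt (Ztf n ν) D ξ ∧ D (e3 n) = 0 := by
  refine ⟨∑ i, (((2 * ξ.2.1 i) • ((2 * ν.2.2) • pyc n i) + af n ν i ξ • ((2:ℝ) • pyc n i))
      - ((2 * ξ.1 i) • ((-(2 * ν.2.2)) • pxc n i) + bf n ν i ξ • ((2:ℝ) • pxc n i))), ?_, ?_⟩
  · unfold Ztf
    refine HasFDerivAt.fun_sum fun i _ => HasFDerivAt.sub ?_ ?_
    · have h1 : HasFDerivAt (fun ζ : H n => 2 * ζ.2.1 i) ((2:ℝ) • pyc n i) ξ :=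
        (pyc n i).hasFDerivAt.const_mul 2
      exact h1.mul (hasFDerivAt_af ν i ξ)
    · have h1 : HasFDerivAt (fun ζ : H n => 2 * ζ.1 i) ((2:ℝ) • pxc n i) ξ :=
        (pxc n i).hasFDerivAt.const_mul 2
      exact h1.mul (hasFDerivAt_bf ν i ξ)
  · rw [ContinuousLinearMap.sum_apply]
    exact Finset.sum_eq_zero fun i _ => by simp [e3]

end HeisenAux

namespace HeisenAux

lemma abs_rpow_eq_sq_rpow (β : ℝ) (s : ℝ) : |s| ^ β = (s ^ 2) ^ (β / 2) := by
  rw [← sq_abs s, ← Real.rpow_natCast |s| 2, ← Real.rpow_mul (abs_nonneg s)]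
  congr 1
  push_cast; ring

lemma continuous_abs_rpow {c : ℝ} (hc : 0 < c) : Continuous fun t : ℝ => |t| ^ c := by
  have h1 : Continuous fun s : ℝ => s ^ (c / 2) :=
    (continuous_id (X := ℝ)).rpow_const fun s => Or.inr (by positivity)
  have h2 : (fun t : ℝ => |t| ^ c) = fun t => (t ^ 2) ^ (c / 2) := by
    funext t; exact abs_rpow_eq_sq_rpow c t
  rw [h2]
  exact h1.comp (continuous_pow 2)

/-- Derivative of `|f|^β` for `β > 1`. -/
lemma hasFDerivAt_abs_rpow {E : Type*} [NormedAddCommGroup E] [NormedSpace ℝ E]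
    {f : E → ℝ} {f' : E →L[ℝ] ℝ} {x : E} {β : ℝ} (hβ : 1 < β)
    (hf : HasFDerivAt f f' x) :
    HasFDerivAt (fun y => |f y| ^ β) ((β * f x * |f x| ^ (β - 2)) • f') x := by
  have hβ0 : β ≠ 0 := by linarith
  rcases eq_or_ne (f x) 0 with h0 | h0
  · -- derivative is zero
    have hz : (β * f x * |f x| ^ (β - 2)) • f' = 0 := by rw [h0]; simp
    rw [hz]
    refine hasFDerivAt_iff_isLittleO.2 ?_
    have hO : (fun y => f y - f x) =O[𝓝 x] fun y => y - x := hf.isBigO_sub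
    rcases hO.exists_pos with ⟨C, hC, hCev⟩
    rw [Asymptotics.isLittleO_iff]
    intro c hc
    have hb1 : (0:ℝ) < β - 1 := by linarith
    have h1 : Tendsto (fun y : E => C ^ β * ‖y - x‖ ^ (β - 1)) (𝓝 x) (𝓝 0) := by
      have hcont : Continuous fun y : E => C ^ β * ‖y - x‖ ^ (β - 1) := by
        have h3 : Continuous fun y : E => |‖y - x‖| ^ (β - 1) :=
          (continuous_abs_rpow hb1).comp (continuous_id.sub continuous_const).norm
        simp only [abs_norm] at h3
        exact continuous_const.mul h3
      have := hcont.tendsto x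
      simpa [Real.zero_rpow (ne_of_gt hb1)] using this
    have h2 : ∀ᶠ y : E in 𝓝 x, C ^ β * ‖y - x‖ ^ (β - 1) ≤ c :=
      (h1.eventually_lt_const hc).mono fun y hy => le_of_lt hy
    rw [Asymptotics.isBigOWith_iff] at hCev
    filter_upwards [hCev, h2] with y hy1 hy2
    simp only [h0, sub_zero, abs_zero, Real.zero_rpow hβ0,
      ContinuousLinearMap.zero_apply] at hy1 ⊢
    have hfy : ‖f y‖ ≤ C * ‖y - x‖ := hy1
    have hb : ‖|f y| ^ β‖ = |f y| ^ β := by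
      rw [Real.norm_eq_abs, abs_of_nonneg (Real.rpow_nonneg (abs_nonneg _) _)]
    rw [hb]
    calc |f y| ^ β ≤ (C * ‖y - x‖) ^ β := by
          apply Real.rpow_le_rpow (abs_nonneg _) _ (by linarith)
          simpa using hfy
      _ = C ^ β * ‖y - x‖ ^ β := Real.mul_rpow hC.le (norm_nonneg _)
      _ = C ^ β * (‖y - x‖ ^ (β - 1) * ‖y - x‖ ^ (1:ℝ)) := by
          rcases eq_or_ne (y - x) 0 with hyx | hyx
          · rw [hyx]
            simp [Real.zero_rpow hβ0, Real.zero_rpow (ne_of_gt hb1)]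
          · rw [← Real.rpow_add (norm_pos_iff.2 hyx)]; norm_num
      _ = C ^ β * ‖y - x‖ ^ (β - 1) * ‖y - x‖ := by rw [Real.rpow_one]; ring
      _ ≤ c * ‖y - x‖ := mul_le_mul_of_nonneg_right hy2 (norm_nonneg _)
  · -- f x ≠ 0 : chain rule through t ↦ (t^2)^(β/2)
    have hrw : (fun y => |f y| ^ β) = fun y => (f y ^ 2) ^ (β / 2) := by
      funext y; exact abs_rpow_eq_sq_rpow β (f y)
    rw [hrw]
    have hsq : HasFDerivAt (fun y => f y ^ 2) ((2 * f x) • f') x := by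
      have h := hf.mul hf
      have e1 : (fun y => f y ^ 2) = fun y => f y * f y := by funext y; ring
      have e2 : (2 * f x) • f' = f x • f' + f x • f' := by
        rw [two_mul, add_smul]
      rw [e1, e2]; exact h
    have hr : HasDerivAt (fun t : ℝ => t ^ (β / 2)) (β / 2 * (f x ^ 2) ^ (β / 2 - 1)) (f x ^ 2) :=
      Real.hasDerivAt_rpow_const (Or.inl (pow_ne_zero 2 h0))
    have hc := hr.comp_hasFDerivAt x hsq
    have hc' : HasFDerivAt (fun y => (f y ^ 2) ^ (β / 2))
        (((β / 2 * (f x ^ 2) ^ (β / 2 - 1)) * (2 * f x)) • f') x := by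
      rw [← smul_smul]; exact hc
    convert hc' using 2
    have habs : (f x ^ 2) ^ (β / 2 - 1) = |f x| ^ (β - 2) := by
      rw [← sq_abs, ← Real.rpow_natCast |f x| 2, ← Real.rpow_mul (abs_nonneg _)]
      congr 1
      push_cast; ring
    rw [habs]; ring

end HeisenAux

namespace HeisenAux

variable {n : ℕ}

instance : MeasureTheory.Measure.IsAddHaarMeasure (volume : Measure ((Fin n → ℝ) × ℝ)) := by
  have h : (volume : Measure ((Fin n → ℝ) × ℝ))
      = (volume : Measure (Fin n → ℝ)).prod (volume : Measure ℝ) := rfl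
  rw [h]; infer_instance

instance : MeasureTheory.Measure.IsAddHaarMeasure (volume : Measure (H n)) := by
  have h : (volume : Measure (H n))
      = (volume : Measure (Fin n → ℝ)).prod (volume : Measure ((Fin n → ℝ) × ℝ)) := rfl
  rw [h]; exact Measure.prod.instIsAddHaarMeasure _ _

lemma differentiable_Ztf (ν : H n) : Differentiable ℝ (Ztf n ν) := fun x =>
  (hasFDerivAt_Ztf ν x).choose_spec.1.differentiableAt

lemma fderiv_Ztf_e3 (ν : H n) (x : H n) : fderiv ℝ (Ztf n ν) x (e3 n) = 0 := by
  obtain ⟨D, hD, hD3⟩ := hasFDerivAt_Ztf ν x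
  rw [hD.fderiv]; exact hD3

/-- The fundamental integration by parts identity: the field `Z` is divergence free. -/
lemma integral_fderiv_Zf (ν : H n) (g : H n → ℝ) (hgd : Differentiable ℝ g)
    (hg' : Continuous fun x => fderiv ℝ g x)
    (K : Set (H n)) (hK : IsCompact K) (h0 : ∀ x ∉ K, g x = 0) :
    ∫ x, fderiv ℝ g x (Zf n ν x) = 0 := by
  have hg0' : ∀ x ∉ K, fderiv ℝ g x = 0 := by
    intro x hx
    have hev : g =ᶠ[𝓝 x] (fun _ => (0:ℝ)) :=
      Filter.eventuallyEq_of_mem (hK.isClosed.isOpen_compl.mem_nhds hx) fun y hy => h0 y hy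
    rw [hev.fderiv_eq, fderiv_fun_const]
    rfl
  -- generic inner step
  have key : ∀ (c : H n → ℝ) (v₀ : H n), Continuous c → Differentiable ℝ c →
      (∀ x, fderiv ℝ c x v₀ = 0) → ∫ x, c x * fderiv ℝ g x v₀ = 0 := by
    intro c v₀ hc hcd hc0
    have hDgv : Continuous fun x => fderiv ℝ g x v₀ :=
      ((ContinuousLinearMap.apply ℝ ℝ v₀).continuous).comp hg'
    have hzero : (fun x => fderiv ℝ c x v₀ * g x) = fun _ => (0:ℝ) :=
      funext fun x => by rw [hc0]; ring
    have hfg' : Integrable (fun x => c x * fderiv ℝ g x v₀) := by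
      apply Continuous.integrable_of_hasCompactSupport (hc.mul hDgv)
      exact HasCompactSupport.intro hK fun x hx => by simp only [Pi.mul_apply]; rw [hg0' x hx]; simp
    have hfg : Integrable (fun x => c x * g x) := by
      apply Continuous.integrable_of_hasCompactSupport (hc.mul hgd.continuous)
      exact HasCompactSupport.intro hK fun x hx => by simp only [Pi.mul_apply]; rw [h0 x hx]; ring
    have h := integral_mul_fderiv_eq_neg_fderiv_mul_of_integrable
      (μ := (volume : Measure (H n)))
      (by rw [hzero]; exact integrable_zero _ _ _) hfg' hfg (fun x _ => hcd x) (fun x _ => hgd x)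
    rw [h, hzero]
    simp
  -- integrability of the summand families
  have hDgc : ∀ v₀ : H n, Continuous fun x => fderiv ℝ g x v₀ := fun v₀ =>
    ((ContinuousLinearMap.apply ℝ ℝ v₀).continuous).comp hg'
  have hint : ∀ (c : H n → ℝ) (v₀ : H n), Continuous c →
      Integrable (fun x => c x * fderiv ℝ g x v₀) := by
    intro c v₀ hc
    apply Continuous.integrable_of_hasCompactSupport (hc.mul (hDgc v₀))
    exact HasCompactSupport.intro hK fun x hx => by simp only [Pi.mul_apply]; rw [hg0' x hx]; simp
  have hdecomp : (fun x => fderiv ℝ g x (Zf n ν x)) =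
      fun x => (∑ i, af n ν i x * fderiv ℝ g x (e1 n i))
        + ((∑ i, bf n ν i x * fderiv ℝ g x (e2 n i)) + Ztf n ν x * fderiv ℝ g x (e3 n)) := by
    funext x
    exact clm_decomp (fderiv ℝ g x) (Zf n ν x)
  rw [hdecomp]
  have hint1 : ∀ i : Fin n, Integrable fun x => af n ν i x * fderiv ℝ g x (e1 n i) :=
    fun i => hint _ _ (continuous_af ν i)
  have hint2 : ∀ i : Fin n, Integrable fun x => bf n ν i x * fderiv ℝ g x (e2 n i) :=
    fun i => hint _ _ (continuous_bf ν i)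
  have hint3 : Integrable fun x => Ztf n ν x * fderiv ℝ g x (e3 n) :=
    hint _ _ (continuous_Ztf ν)
  have hintS1 : Integrable fun x => ∑ i, af n ν i x * fderiv ℝ g x (e1 n i) :=
    integrable_finset_sum _ fun i _ => hint1 i
  have hintS2 : Integrable fun x => ∑ i, bf n ν i x * fderiv ℝ g x (e2 n i) :=
    integrable_finset_sum _ fun i _ => hint2 i
  have hint23 : Integrable (fun x => (∑ i, bf n ν i x * fderiv ℝ g x (e2 n i))
      + Ztf n ν x * fderiv ℝ g x (e3 n)) volume := hintS2.add hint3
  rw [integral_add hintS1 hint23, integral_add hintS2 hint3,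
    integral_finset_sum _ fun i _ => hint1 i, integral_finset_sum _ fun i _ => hint2 i]
  have z1 : ∀ i : Fin n, ∫ x, af n ν i x * fderiv ℝ g x (e1 n i) = 0 := fun i =>
    key _ _ (continuous_af ν i) (fun x => (hasFDerivAt_af ν i x).differentiableAt)
      (fun x => fderiv_af_e1 ν i x)
  have z2 : ∀ i : Fin n, ∫ x, bf n ν i x * fderiv ℝ g x (e2 n i) = 0 := fun i =>
    key _ _ (continuous_bf ν i) (fun x => (hasFDerivAt_bf ν i x).differentiableAt)
      (fun x => fderiv_bf_e2 ν i x)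
  have z3 : ∫ x, Ztf n ν x * fderiv ℝ g x (e3 n) = 0 :=
    key _ _ (continuous_Ztf ν) (differentiable_Ztf ν) (fun x => fderiv_Ztf_e3 ν x)
  simp [z1, z2, z3]

end HeisenAux

namespace HeisenAux

variable {n : ℕ}

/-- integrability on an open set of a continuous function vanishing outside a compact. -/
lemma integrableOn_of_contOn {S K : Set (H n)} (hS : MeasurableSet S) (hK : IsCompact K)
    (hKS : K ⊆ S) (f : H n → ℝ) (hf : ContinuousOn f S)
    (h0 : ∀ x ∈ S, x ∉ K → f x = 0) : IntegrableOn f S volume := by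
  obtain ⟨C, hC⟩ := hK.exists_bound_of_continuousOn (hf.mono hKS)
  have hbound : Integrable (K.indicator fun _ => max C 0) volume :=
    (integrableOn_const hK.measure_lt_top.ne).integrable_indicator hK.measurableSet
  refine Integrable.mono' hbound.restrict (hf.aestronglyMeasurable hS) ?_
  rw [ae_restrict_iff' hS]
  refine Filter.Eventually.of_forall fun x hx => ?_
  by_cases hxK : x ∈ K
  · rw [Set.indicator_of_mem hxK]
    exact le_trans (hC x hxK) (le_max_left _ _)
  · rw [Set.indicator_of_notMem hxK, h0 x hx hxK]
    simp

lemma abs_mul_abs_rpow {β : ℝ} (hβ : 1 < β) (s : ℝ) : |s| * |s| ^ (β - 2) = |s| ^ (β - 1) := by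
  rcases eq_or_ne s 0 with rfl | hs
  · rw [abs_zero, zero_mul, Real.zero_rpow (by linarith : β - 1 ≠ 0)]
  · have h : (0:ℝ) < |s| := abs_pos.2 hs
    rw [show |s| * |s| ^ (β - 2) = |s| ^ (1:ℝ) * |s| ^ (β - 2) by rw [Real.rpow_one],
      ← Real.rpow_add h]
    congr 1; ring

lemma abs_cv {β : ℝ} (hβ : 1 < β) (s : ℝ) :
    |β * s * |s| ^ (β - 2)| = β * |s| ^ (β - 1) := by
  rw [abs_mul, abs_mul, abs_of_nonneg (by linarith : (0:ℝ) ≤ β),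
    abs_of_nonneg (Real.rpow_nonneg (abs_nonneg s) _), mul_assoc, abs_mul_abs_rpow hβ]

/-- continuity of the `cv` factor. -/
lemma continuousOn_cv {β : ℝ} (hβ : 1 < β) {v : H n → ℝ} {S : Set (H n)}
    (hv : ContinuousOn v S) :
    ContinuousOn (fun ξ => β * v ξ * |v ξ| ^ (β - 2)) S := by
  intro x hx
  rcases eq_or_ne (v x) 0 with h0 | h0
  · -- squeeze
    have hval : β * v x * |v x| ^ (β - 2) = 0 := by rw [h0]; simp
    rw [ContinuousWithinAt, hval]
    have hb : ∀ ξ, ‖β * v ξ * |v ξ| ^ (β - 2)‖ ≤ β * |v ξ| ^ (β - 1) := fun t =>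
      le_of_eq (by rw [Real.norm_eq_abs, abs_cv hβ])
    refine squeeze_zero_norm hb ?_
    have habs : Continuous (fun t : ℝ => β * |t| ^ (β - 1)) :=
      continuous_const.mul (continuous_abs_rpow (by linarith : (0:ℝ) < β - 1))
    have hcont := (habs.comp_continuousOn hv) x hx
    rw [ContinuousWithinAt] at hcont
    simpa [Function.comp_def, h0, Real.zero_rpow (show β - 1 ≠ 0 by linarith)] using hcont
  · -- ordinary continuity
    have h1 : ContinuousWithinAt v S x := hv x hx
    have h2 : ContinuousAt (fun t : ℝ => |t| ^ (β - 2)) (v x) := by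
      have habs : ContinuousAt (abs : ℝ → ℝ) (v x) := continuous_abs.continuousAt
      have := (Real.continuousAt_rpow_const |v x| (β - 2) (Or.inl (abs_ne_zero.2 h0)))
      exact this.comp habs
    exact ((continuousWithinAt_const.mul h1).mul (h2.comp_continuousWithinAt h1))

/-- elementary inequality `√s ≤ s/√(s+ε²) + ε`. -/
lemma sqrt_le_div_add {s ε : ℝ} (hs : 0 ≤ s) (hε : 0 < ε) :
    Real.sqrt s ≤ s * (Real.sqrt (s + ε ^ 2))⁻¹ + ε := by
  have hse : (0:ℝ) < s + ε ^ 2 := by positivity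
  set a := Real.sqrt s with ha
  set t := Real.sqrt (s + ε ^ 2) with hts
  have ht : 0 < t := Real.sqrt_pos.2 hse
  have ha0 : 0 ≤ a := Real.sqrt_nonneg _
  have ha2 : a ^ 2 = s := Real.sq_sqrt hs
  have ht2 : t ^ 2 = s + ε ^ 2 := Real.sq_sqrt hse.le
  have hat : a ≤ t := Real.sqrt_le_sqrt (by nlinarith)
  have hεt : ε ≤ t := by nlinarith
  have key : a * t ≤ s + ε * t := by nlinarith [sq_nonneg (a - t)]
  have hrw : s * t⁻¹ + ε = (s + ε * t) / t := by field_simp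
  rw [hrw, le_div_iff₀ ht]
  exact key

lemma sqrt_mul_inv_sqrt_le_one {s ε : ℝ} (hs : 0 ≤ s) (hε : 0 < ε) :
    Real.sqrt s * (Real.sqrt (s + ε ^ 2))⁻¹ ≤ 1 := by
  have hse : (0:ℝ) < s + ε ^ 2 := by positivity
  have ht : 0 < Real.sqrt (s + ε ^ 2) := Real.sqrt_pos.2 hse
  have hmono : Real.sqrt s ≤ Real.sqrt (s + ε ^ 2) := Real.sqrt_le_sqrt (by nlinarith)
  calc Real.sqrt s * (Real.sqrt (s + ε ^ 2))⁻¹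
      ≤ Real.sqrt (s + ε ^ 2) * (Real.sqrt (s + ε ^ 2))⁻¹ :=
        mul_le_mul_of_nonneg_right hmono (by positivity)
    _ = 1 := mul_inv_cancel₀ (ne_of_gt ht)

/-- sum Cauchy-Schwarz via sqrt. -/
lemma abs_sum_mul_le (m : ℕ) (f g : Fin m → ℝ) :
    |∑ i, f i * g i| ≤ Real.sqrt (∑ i, f i ^ 2) * Real.sqrt (∑ i, g i ^ 2) := by
  have h := Finset.sum_mul_sq_le_sq_mul_sq Finset.univ f g
  calc |∑ i, f i * g i| = Real.sqrt ((∑ i, f i * g i) ^ 2) := (Real.sqrt_sq_eq_abs _).symm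
    _ ≤ Real.sqrt ((∑ i, f i ^ 2) * ∑ i, g i ^ 2) := Real.sqrt_le_sqrt h
    _ = Real.sqrt (∑ i, f i ^ 2) * Real.sqrt (∑ i, g i ^ 2) :=
        Real.sqrt_mul (Finset.sum_nonneg fun i _ => sq_nonneg _) _

lemma two_dim_cs (x1 x2 y1 y2 : ℝ) (hx1 : 0 ≤ x1) (hx2 : 0 ≤ x2) (hy1 : 0 ≤ y1) (hy2 : 0 ≤ y2) :
    x1 * y1 + x2 * y2 ≤ Real.sqrt (x1 ^ 2 + x2 ^ 2) * Real.sqrt (y1 ^ 2 + y2 ^ 2) := by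
  have h1 : x1 * y1 + x2 * y2 ≤ |x1 * y1 + x2 * y2| := le_abs_self _
  have h2 : |x1 * y1 + x2 * y2| = Real.sqrt ((x1 * y1 + x2 * y2) ^ 2) :=
    (Real.sqrt_sq_eq_abs _).symm
  have h3 : (x1 * y1 + x2 * y2) ^ 2 ≤ (x1 ^ 2 + x2 ^ 2) * (y1 ^ 2 + y2 ^ 2) := by
    nlinarith [sq_nonneg (x1 * y2 - x2 * y1)]
  calc x1 * y1 + x2 * y2 ≤ Real.sqrt ((x1 * y1 + x2 * y2) ^ 2) := h2 ▸ h1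
    _ ≤ Real.sqrt ((x1 ^ 2 + x2 ^ 2) * (y1 ^ 2 + y2 ^ 2)) := Real.sqrt_le_sqrt h3
    _ = _ := Real.sqrt_mul (by positivity) _

/-- Cauchy–Schwarz for the horizontal gradient. -/
lemma abs_fderiv_Zf_le (ν : H n) (v : H n → ℝ) (ξ : H n) :
    |fderiv ℝ v ξ (Zf n ν ξ)| ≤ Real.sqrt (Nsq n ν ξ) * hNorm n v ξ := by
  rw [clm_Zf]
  set c : Fin n → ℝ := fun i => fderiv ℝ v ξ (Xv n i ξ)
  set e : Fin n → ℝ := fun i => fderiv ℝ v ξ (Yv n i ξ)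
  have h1 : |(∑ i, af n ν i ξ * c i) + ∑ i, bf n ν i ξ * e i|
      ≤ |∑ i, af n ν i ξ * c i| + |∑ i, bf n ν i ξ * e i| := abs_add_le _ _
  have h2 := abs_sum_mul_le n (fun i => af n ν i ξ) c
  have h3 := abs_sum_mul_le n (fun i => bf n ν i ξ) e
  have h4 := two_dim_cs (Real.sqrt (∑ i, af n ν i ξ ^ 2)) (Real.sqrt (∑ i, bf n ν i ξ ^ 2))
    (Real.sqrt (∑ i, c i ^ 2)) (Real.sqrt (∑ i, e i ^ 2))
    (Real.sqrt_nonneg _) (Real.sqrt_nonneg _) (Real.sqrt_nonneg _) (Real.sqrt_nonneg _)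
  have hsq : ∀ w : Fin n → ℝ, Real.sqrt (∑ i, w i ^ 2) ^ 2 = ∑ i, w i ^ 2 := fun w =>
    Real.sq_sqrt (Finset.sum_nonneg fun i _ => sq_nonneg _)
  rw [hsq, hsq, hsq, hsq] at h4
  have h5 : Real.sqrt ((∑ i, af n ν i ξ ^ 2) + ∑ i, bf n ν i ξ ^ 2)
      = Real.sqrt (Nsq n ν ξ) := by
    rw [Nsq, Finset.sum_add_distrib]
  have h6 : Real.sqrt ((∑ i, c i ^ 2) + ∑ i, e i ^ 2) = hNorm n v ξ := by
    rw [hNorm, Finset.sum_add_distrib]; rfl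
  calc |(∑ i, af n ν i ξ * c i) + ∑ i, bf n ν i ξ * e i|
      ≤ |∑ i, af n ν i ξ * c i| + |∑ i, bf n ν i ξ * e i| := h1
    _ ≤ Real.sqrt (∑ i, af n ν i ξ ^ 2) * Real.sqrt (∑ i, c i ^ 2)
        + Real.sqrt (∑ i, bf n ν i ξ ^ 2) * Real.sqrt (∑ i, e i ^ 2) := add_le_add h2 h3
    _ ≤ Real.sqrt ((∑ i, af n ν i ξ ^ 2) + ∑ i, bf n ν i ξ ^ 2)
        * Real.sqrt ((∑ i, c i ^ 2) + ∑ i, e i ^ 2) := h4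
    _ = Real.sqrt (Nsq n ν ξ) * hNorm n v ξ := by rw [h5, h6]

end HeisenAux

namespace HeisenAux

variable {n : ℕ}

lemma continuous_Xv (i : Fin n) : Continuous (Xv n i) := by
  unfold Xv; fun_prop

lemma continuous_Yv (i : Fin n) : Continuous (Yv n i) := by
  unfold Yv; fun_prop

lemma continuous_DNsq (ν : H n) : Continuous fun x => DNsq n ν x := by
  unfold DNsq
  refine continuous_finset_sum _ fun i _ => Continuous.add (Continuous.add ?_ ?_) (.add ?_ ?_)
    <;> first
      | exact ((continuous_af ν i).smul continuous_const)
      | exact ((continuous_bf ν i).smul continuous_const)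

end HeisenAux

open HeisenAux

set_option maxHeartbeats 2000000 in
theorem I2_le_I1 (n : ℕ) (ν : H n) (hν : iprod n ν ν = 1) (d : ℝ)
    (p : ℝ) (hp2 : 2 ≤ p) (hpQ : p < 2 * n + 2)
    (u v : H n → ℝ) (hu : ContDiff ℝ (⊤ : ℕ∞) u) (hcu : HasCompactSupport u)
    (hsupp : tsupport u ⊆ {ξ : H n | d < iprod n ξ ν})
    (hv : ContDiffOn ℝ (⊤ : ℕ∞) v {ξ : H n | d < iprod n ξ ν})
    (huv : ∀ ξ ∈ {ξ : H n | d < iprod n ξ ν},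
      v ξ = (iprod n ξ ν - d) ^ (-((p - 1) / p)) * u ξ) :
    (∫ ξ in {ξ : H n | d < iprod n ξ ν},
        (iprod n ξ ν - d) ^
            ((((2 * n + 2 : ℝ) * p / ((2 * n + 2 : ℝ) - p)) * (1 - 1 / p) ^ 2
              + 1 - 1 / p) - 1)
          * hNorm n (fun ζ => iprod n ζ ν - d) ξ
          * |v ξ| ^
            ((((2 * n + 2 : ℝ) * p / ((2 * n + 2 : ℝ) - p)) * (1 - 1 / p) ^ 2
              + 1 - 1 / p) * p / (p - 1))) ≤
      (p / (p - 1)) *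
        ∫ ξ in {ξ : H n | d < iprod n ξ ν},
          |u ξ| ^ (((2 * n + 2 : ℝ) * p / ((2 * n + 2 : ℝ) - p)) * (1 - 1 / p))
            * (iprod n ξ ν - d) ^ ((p - 1) / p) * hNorm n v ξ := by
  classical
  have hp1 : 1 < p := lt_of_lt_of_le one_lt_two hp2
  have hp0 : 0 < p := by linarith
  have hpm : 0 < p - 1 := by linarith
  set Q : ℝ := 2 * (n : ℝ) + 2 with hQdef
  have hQpos : 0 < Q := by positivity
  have hQp : 0 < Q - p := by rw [hQdef]; push_cast at hpQ ⊢; linarith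
  set Ps : ℝ := Q * p / (Q - p) with hPsdef
  have hPs : 0 < Ps := div_pos (mul_pos hQpos hp0) hQp
  have hop : 0 < 1 - 1 / p := by
    rw [sub_pos]; exact (div_lt_one hp0).2 hp1
  set A : ℝ := Ps * (1 - 1 / p) ^ 2 + 1 - 1 / p with hAdef
  have hA : 0 < A := by
    rw [hAdef]
    nlinarith [mul_pos hPs (pow_pos hop 2)]
  set B : ℝ := A * p / (p - 1) with hBdef
  have hBalt : B = Ps * (1 - 1 / p) + 1 := by
    rw [hBdef, hAdef]; field_simp; ring
  have hB1 : 1 < B := by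
    rw [hBalt]
    nlinarith [mul_pos hPs hop]
  have hB0 : (0 : ℝ) < B := by linarith
  have hBne : B ≠ 0 := ne_of_gt hB0
  have hBm1 : Ps * (1 - 1 / p) = B - 1 := by rw [hBalt]; ring
  have hBm1pos : (0 : ℝ) < B - 1 := by linarith
  -- geometry
  set S : Set (H n) := {ξ : H n | d < iprod n ξ ν} with hSdef
  have hiprodc : Continuous fun ξ : H n => iprod n ξ ν := by
    have h : (fun ξ : H n => iprod n ξ ν) = fun ξ => lν n ν ξ := by
      funext ξ; rw [lν_apply]
    rw [h]; exact (lν n ν).continuous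
  have hSopen : IsOpen S := isOpen_lt continuous_const hiprodc
  have hSmeas : MeasurableSet S := hSopen.measurableSet
  have hKcpt : IsCompact (tsupport u) := hcu
  have hKS : tsupport u ⊆ S := hsupp
  have hδpos : ∀ ξ ∈ S, 0 < iprod n ξ ν - d := fun ξ hξ => sub_pos.2 hξ
  have hvdiff : ∀ ξ ∈ S, DifferentiableAt ℝ v ξ := fun ξ hξ =>
    (hv.differentiableOn (by simp)).differentiableAt (hSopen.mem_nhds hξ)
  -- pointwise identities on S
  have habs_v : ∀ ξ ∈ S, |v ξ| = (iprod n ξ ν - d) ^ (-((p - 1) / p)) * |u ξ| := by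
    intro ξ hξ
    rw [huv ξ hξ, abs_mul, abs_of_nonneg (Real.rpow_nonneg (hδpos ξ hξ).le _)]
  have hexp0 : A + -((p - 1) / p) * B = 0 := by
    rw [hBdef]; field_simp; ring
  have hexp1 : A + -((p - 1) / p) * (B - 1) = (p - 1) / p := by
    rw [hBdef]; field_simp; ring
  have hGW : ∀ ξ ∈ S, |u ξ| ^ B = (iprod n ξ ν - d) ^ A * |v ξ| ^ B := by
    intro ξ hξ
    have hδ := hδpos ξ hξ
    rw [habs_v ξ hξ, Real.mul_rpow (Real.rpow_nonneg hδ.le _) (abs_nonneg _),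
      ← Real.rpow_mul hδ.le, ← mul_assoc, ← Real.rpow_add hδ, hexp0, Real.rpow_zero, one_mul]
  have hI2 : ∀ ξ ∈ S, (iprod n ξ ν - d) ^ A * |v ξ| ^ (B - 1)
      = (iprod n ξ ν - d) ^ ((p - 1) / p) * |u ξ| ^ (B - 1) := by
    intro ξ hξ
    have hδ := hδpos ξ hξ
    rw [habs_v ξ hξ, Real.mul_rpow (Real.rpow_nonneg hδ.le _) (abs_nonneg _),
      ← Real.rpow_mul hδ.le, ← mul_assoc, ← Real.rpow_add hδ, hexp1]
  have hW0 : ∀ ξ ∈ S, ξ ∉ tsupport u → v ξ = 0 := fun ξ hξ hK => by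
    rw [huv ξ hξ, image_eq_zero_of_notMem_tsupport hK, mul_zero]
  -- continuity on S
  have hδcont : ContinuousOn (fun ξ : H n => iprod n ξ ν - d) S :=
    (hiprodc.sub continuous_const).continuousOn
  have hδrpow : ∀ γ : ℝ, ContinuousOn (fun ξ : H n => (iprod n ξ ν - d) ^ γ) S := fun γ =>
    hδcont.rpow_const fun ξ hξ => Or.inl (ne_of_gt (hδpos ξ hξ))
  have hvcont : ContinuousOn v S := hv.continuousOn
  have hWcont : ContinuousOn (fun ξ => |v ξ| ^ B) S :=
    (continuous_abs_rpow hB0).comp_continuousOn hvcont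
  have hWm1cont : ContinuousOn (fun ξ => |v ξ| ^ (B - 1)) S :=
    (continuous_abs_rpow hBm1pos).comp_continuousOn hvcont
  have hNcont : Continuous fun ξ => Real.sqrt (Nsq n ν ξ) :=
    Real.continuous_sqrt.comp (continuous_Nsq ν)
  have hUcont : Continuous u := hu.continuous
  have hUB1 : Continuous fun ξ => |u ξ| ^ (B - 1) :=
    (continuous_abs_rpow hBm1pos).comp hUcont
  have hfdv : ContinuousOn (fun ξ => fderiv ℝ v ξ) S :=
    hv.continuousOn_fderiv_of_isOpen hSopen (by simp)
  have hNvcont : ContinuousOn (hNorm n v) S := by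
    have h1 : ∀ i : Fin n, ContinuousOn (fun ξ => fderiv ℝ v ξ (Xv n i ξ)) S := fun i =>
      hfdv.clm_apply (continuous_Xv i).continuousOn
    have h2 : ∀ i : Fin n, ContinuousOn (fun ξ => fderiv ℝ v ξ (Yv n i ξ)) S := fun i =>
      hfdv.clm_apply (continuous_Yv i).continuousOn
    show ContinuousOn (fun ξ => Real.sqrt (∑ i, ((fderiv ℝ v ξ (Xv n i ξ)) ^ 2
      + (fderiv ℝ v ξ (Yv n i ξ)) ^ 2))) S
    exact Real.continuous_sqrt.comp_continuousOn
      (continuousOn_finset_sum _ fun i _ => ((h1 i).pow 2).add ((h2 i).pow 2))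
  have hcvS : ContinuousOn (fun ξ => B * v ξ * |v ξ| ^ (B - 2)) S := continuousOn_cv hB1 hvcont
  have hDvZ : ContinuousOn (fun ξ => fderiv ℝ v ξ (Zf n ν ξ)) S :=
    hfdv.clm_apply (continuous_Zf ν).continuousOn
  -- normalize the goal
  simp_rw [hNorm_delta ν d]
  rw [hBm1]
  -- ε-free integrability
  have hvanW : ∀ ξ ∈ S, ξ ∉ tsupport u → |v ξ| ^ B = 0 := fun ξ hξ hK => by
    rw [hW0 ξ hξ hK, abs_zero, Real.zero_rpow hBne]
  have hImain : IntegrableOn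
      (fun ξ => (iprod n ξ ν - d) ^ (A - 1) * Real.sqrt (Nsq n ν ξ) * |v ξ| ^ B) S volume :=
    integrableOn_of_contOn hSmeas hKcpt hKS _
      (((hδrpow (A - 1)).mul hNcont.continuousOn).mul hWcont)
      (fun ξ hξ hK => by rw [hvanW ξ hξ hK, mul_zero])
  have hIJ : IntegrableOn
      (fun ξ => |u ξ| ^ (B - 1) * (iprod n ξ ν - d) ^ ((p - 1) / p) * hNorm n v ξ) S volume :=
    integrableOn_of_contOn hSmeas hKcpt hKS _
      ((hUB1.continuousOn.mul (hδrpow _)).mul hNvcont)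
      (fun ξ hξ hK => by
        rw [image_eq_zero_of_notMem_tsupport hK, abs_zero,
          Real.zero_rpow (ne_of_gt hBm1pos), zero_mul, zero_mul])
  have hICC : IntegrableOn (fun ξ => (iprod n ξ ν - d) ^ (A - 1) * |v ξ| ^ B) S volume :=
    integrableOn_of_contOn hSmeas hKcpt hKS _
      ((hδrpow (A - 1)).mul hWcont)
      (fun ξ hξ hK => by rw [hvanW ξ hξ hK, mul_zero])
  have hJnn : 0 ≤ ∫ ξ in S, |u ξ| ^ (B - 1) * (iprod n ξ ν - d) ^ ((p - 1) / p) * hNorm n v ξ := by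
    apply setIntegral_nonneg hSmeas
    intro ξ hξ
    have : (0:ℝ) ≤ hNorm n v ξ := Real.sqrt_nonneg _
    have h1 : (0:ℝ) ≤ |u ξ| ^ (B - 1) := Real.rpow_nonneg (abs_nonneg _) _
    have h2 : (0:ℝ) ≤ (iprod n ξ ν - d) ^ ((p - 1) / p) := Real.rpow_nonneg (hδpos ξ hξ).le _
    positivity
  set CC : ℝ := ∫ ξ in S, (iprod n ξ ν - d) ^ (A - 1) * |v ξ| ^ B with hCCdef
  have hCCnn : 0 ≤ CC := by
    rw [hCCdef]
    apply setIntegral_nonneg hSmeas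
    intro ξ hξ
    exact mul_nonneg (Real.rpow_nonneg (hδpos ξ hξ).le _) (Real.rpow_nonneg (abs_nonneg _) _)
  -- the ε-argument
  apply le_of_forall_pos_le_add
  intro η hη
  have hCC1 : (0:ℝ) < CC + 1 := by linarith
  set ε : ℝ := η / (CC + 1) with hεdef
  have hε : 0 < ε := div_pos hη hCC1
  -- the regularized weight F
  set F : H n → ℝ := fun ξ => (Real.sqrt (Nsq n ν ξ + ε ^ 2))⁻¹ with hFdef
  have hqpos : ∀ ξ : H n, 0 < Nsq n ν ξ + ε ^ 2 := fun ξ =>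
    add_pos_of_nonneg_of_pos (Nsq_nonneg ν ξ) (by positivity)
  have hsqpos : ∀ ξ : H n, 0 < Real.sqrt (Nsq n ν ξ + ε ^ 2) := fun ξ =>
    Real.sqrt_pos.2 (hqpos ξ)
  have hFpos : ∀ ξ, 0 < F ξ := fun ξ => inv_pos.2 (hsqpos ξ)
  have hFcont : Continuous F :=
    (Real.continuous_sqrt.comp ((continuous_Nsq ν).add continuous_const)).inv₀
      fun ξ => ne_of_gt (hsqpos ξ)
  -- derivative of F
  have hFderiv : ∀ x : H n, HasFDerivAt F
      ((-(1 / (2 * Real.sqrt (Nsq n ν x + ε ^ 2))) / Real.sqrt (Nsq n ν x + ε ^ 2) ^ 2)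
        • DNsq n ν x) x := by
    intro x
    have hq : HasFDerivAt (fun y => Nsq n ν y + ε ^ 2) (DNsq n ν x) x :=
      (hasFDerivAt_Nsq ν x).add_const _
    have hs : HasDerivAt (fun t => (Real.sqrt t)⁻¹)
        (-(1 / (2 * Real.sqrt (Nsq n ν x + ε ^ 2))) / Real.sqrt (Nsq n ν x + ε ^ 2) ^ 2)
        (Nsq n ν x + ε ^ 2) :=
      (Real.hasDerivAt_sqrt (ne_of_gt (hqpos x))).inv (ne_of_gt (hsqpos x))
    have h := hs.comp_hasFDerivAt x hq
    exact h
  have hFdiff : Differentiable ℝ F := fun x => (hFderiv x).differentiableAt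
  have hFfderiv : ∀ x, fderiv ℝ F x =
      (-(1 / (2 * Real.sqrt (Nsq n ν x + ε ^ 2))) / Real.sqrt (Nsq n ν x + ε ^ 2) ^ 2)
        • DNsq n ν x := fun x => (hFderiv x).fderiv
  have hfderivFcont : Continuous fun x => fderiv ℝ F x := by
    rw [funext hFfderiv]
    beta_reduce
    apply Continuous.fun_smul _ (continuous_DNsq ν)
    have hc : Continuous fun x : H n => Real.sqrt (Nsq n ν x + ε ^ 2) :=
      Real.continuous_sqrt.comp ((continuous_Nsq ν).add continuous_const)
    exact Continuous.div
      (continuous_const.div (continuous_const.mul hc)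
        (fun x => mul_ne_zero two_ne_zero (ne_of_gt (hsqpos x)))).neg
      (hc.pow 2) (fun x => by have := hsqpos x; positivity)
  have hDF_Z : ∀ x, fderiv ℝ F x (Zf n ν x) = 0 := fun x => by
    rw [hFfderiv x]
    simp [DNsq_Zf ν x]
  -- the function G = |u|^B
  have hGderiv : ∀ x : H n, HasFDerivAt (fun y => |u y| ^ B)
      ((B * u x * |u x| ^ (B - 2)) • fderiv ℝ u x) x := fun x =>
    hasFDerivAt_abs_rpow hB1 (hu.differentiable (by simp) x).hasFDerivAt
  have hGdiff : Differentiable ℝ fun y => |u y| ^ B := fun x => (hGderiv x).differentiableAt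
  have hGfderiv : ∀ x, fderiv ℝ (fun y => |u y| ^ B) x
      = (B * u x * |u x| ^ (B - 2)) • fderiv ℝ u x := fun x => (hGderiv x).fderiv
  have hcucont : Continuous fun x => B * u x * |u x| ^ (B - 2) := by
    rw [← continuousOn_univ]
    exact continuousOn_cv hB1 hUcont.continuousOn
  have hfderivGcont : Continuous fun x => fderiv ℝ (fun y => |u y| ^ B) x := by
    rw [funext hGfderiv]
    exact hcucont.smul (hu.continuous_fderiv (by simp))
  -- the product g = F * G and integration by parts
  have hgdiff : Differentiable ℝ fun x => F x * |u x| ^ B := hFdiff.mul hGdiff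
  have hgfderiv : ∀ x, fderiv ℝ (fun y => F y * |u y| ^ B) x
      = F x • fderiv ℝ (fun y => |u y| ^ B) x + |u x| ^ B • fderiv ℝ F x := fun x =>
    fderiv_fun_mul (hFdiff x) (hGdiff x)
  have hgfcont : Continuous fun x => fderiv ℝ (fun y => F y * |u y| ^ B) x := by
    rw [funext hgfderiv]
    exact (hFcont.smul hfderivGcont).add
      (((continuous_abs_rpow hB0).comp hUcont).smul hfderivFcont)
  have hg0 : ∀ x ∉ tsupport u, F x * |u x| ^ B = 0 := fun x hx => by
    rw [image_eq_zero_of_notMem_tsupport hx, abs_zero, Real.zero_rpow hBne, mul_zero]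
  have hIBP0 : ∫ x, fderiv ℝ (fun y => F y * |u y| ^ B) x (Zf n ν x) = 0 :=
    integral_fderiv_Zf ν _ hgdiff hgfcont (tsupport u) hKcpt hg0
  have hIBP : ∫ x, F x * fderiv ℝ (fun y => |u y| ^ B) x (Zf n ν x) = 0 := by
    rw [← hIBP0]
    congr 1
    funext x
    rw [hgfderiv x]
    simp [hDF_Z x]
  -- vanishing off S and conversion to a set integral
  have hfdG0 : ∀ x, x ∉ tsupport u → fderiv ℝ (fun y => |u y| ^ B) x = 0 := by
    intro x hx
    have hev : (fun y => |u y| ^ B) =ᶠ[𝓝 x] fun _ => (0:ℝ) :=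
      Filter.eventuallyEq_of_mem (hKcpt.isClosed.isOpen_compl.mem_nhds hx)
        fun y hy => by
          rw [image_eq_zero_of_notMem_tsupport hy, abs_zero, Real.zero_rpow hBne]
    rw [hev.fderiv_eq, fderiv_fun_const]
    rfl
  have hsetIBP : ∫ x in S, F x * fderiv ℝ (fun y => |u y| ^ B) x (Zf n ν x) = 0 := by
    rw [setIntegral_eq_integral_of_forall_compl_eq_zero, hIBP]
    intro x hx
    rw [hfdG0 x fun hK => hx (hKS hK)]
    simp
  -- pointwise identity on S
  have hGderivS : ∀ ξ ∈ S, F ξ * fderiv ℝ (fun y => |u y| ^ B) ξ (Zf n ν ξ)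
      = A * ((iprod n ξ ν - d) ^ (A - 1) * (Nsq n ν ξ * F ξ) * |v ξ| ^ B)
        + F ξ * ((iprod n ξ ν - d) ^ A
          * ((B * v ξ * |v ξ| ^ (B - 2)) * fderiv ℝ v ξ (Zf n ν ξ))) := by
    intro ξ hξ
    have hev : (fun y => |u y| ^ B) =ᶠ[𝓝 ξ]
        fun ζ => (iprod n ζ ν - d) ^ A * |v ζ| ^ B :=
      Filter.eventuallyEq_of_mem (hSopen.mem_nhds hξ) fun ζ hζ => hGW ζ hζ
    have hδA : HasFDerivAt (fun ζ : H n => (iprod n ζ ν - d) ^ A)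
        ((A * (iprod n ξ ν - d) ^ (A - 1)) • lν n ν) ξ := by
      have h := (Real.hasDerivAt_rpow_const (x := iprod n ξ ν - d) (p := A)
        (Or.inl (ne_of_gt (hδpos ξ hξ)))).comp_hasFDerivAt ξ (hasFDerivAt_delta ν d ξ)
      exact h
    have hWf : HasFDerivAt (fun ζ => |v ζ| ^ B)
        ((B * v ξ * |v ξ| ^ (B - 2)) • fderiv ℝ v ξ) ξ :=
      hasFDerivAt_abs_rpow hB1 (hvdiff ξ hξ).hasFDerivAt
    have hprod := hδA.mul hWf
    have hG : HasFDerivAt (fun y => |u y| ^ B)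
        ((iprod n ξ ν - d) ^ A • ((B * v ξ * |v ξ| ^ (B - 2)) • fderiv ℝ v ξ)
          + |v ξ| ^ B • ((A * (iprod n ξ ν - d) ^ (A - 1)) • lν n ν)) ξ :=
      hprod.congr_of_eventuallyEq hev
    rw [hG.fderiv]
    simp only [ContinuousLinearMap.add_apply, ContinuousLinearMap.smul_apply,
      smul_eq_mul, lν_Zf]
    ring
  -- integrability of the two pieces
  have hIT1 : IntegrableOn
      (fun ξ => (iprod n ξ ν - d) ^ (A - 1) * (Nsq n ν ξ * F ξ) * |v ξ| ^ B) S volume :=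
    integrableOn_of_contOn hSmeas hKcpt hKS _
      (((hδrpow (A - 1)).mul ((continuous_Nsq ν).mul hFcont).continuousOn).mul hWcont)
      (fun ξ hξ hK => by rw [hvanW ξ hξ hK, mul_zero])
  have hIT2 : IntegrableOn
      (fun ξ => F ξ * ((iprod n ξ ν - d) ^ A
        * ((B * v ξ * |v ξ| ^ (B - 2)) * fderiv ℝ v ξ (Zf n ν ξ)))) S volume :=
    integrableOn_of_contOn hSmeas hKcpt hKS _
      (hFcont.continuousOn.mul ((hδrpow A).mul (hcvS.mul hDvZ)))
      (fun ξ hξ hK => by rw [hW0 ξ hξ hK]; simp)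
  -- the divergence identity on S
  have hsplit : A * (∫ ξ in S, (iprod n ξ ν - d) ^ (A - 1) * (Nsq n ν ξ * F ξ) * |v ξ| ^ B)
      + (∫ ξ in S, F ξ * ((iprod n ξ ν - d) ^ A
          * ((B * v ξ * |v ξ| ^ (B - 2)) * fderiv ℝ v ξ (Zf n ν ξ)))) = 0 := by
    have hcongr : ∫ ξ in S, F ξ * fderiv ℝ (fun y => |u y| ^ B) ξ (Zf n ν ξ)
        = ∫ ξ in S, (A * ((iprod n ξ ν - d) ^ (A - 1) * (Nsq n ν ξ * F ξ) * |v ξ| ^ B)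
            + F ξ * ((iprod n ξ ν - d) ^ A
              * ((B * v ξ * |v ξ| ^ (B - 2)) * fderiv ℝ v ξ (Zf n ν ξ)))) :=
      setIntegral_congr_fun hSmeas fun ξ hξ => hGderivS ξ hξ
    have hadd : ∫ ξ in S, (A * ((iprod n ξ ν - d) ^ (A - 1) * (Nsq n ν ξ * F ξ) * |v ξ| ^ B)
            + F ξ * ((iprod n ξ ν - d) ^ A
              * ((B * v ξ * |v ξ| ^ (B - 2)) * fderiv ℝ v ξ (Zf n ν ξ))))
        = A * (∫ ξ in S, (iprod n ξ ν - d) ^ (A - 1) * (Nsq n ν ξ * F ξ) * |v ξ| ^ B)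
          + ∫ ξ in S, F ξ * ((iprod n ξ ν - d) ^ A
              * ((B * v ξ * |v ξ| ^ (B - 2)) * fderiv ℝ v ξ (Zf n ν ξ))) := by
      rw [integral_add (hIT1.const_mul A) hIT2, integral_const_mul]
    rw [← hadd, ← hcongr, hsetIBP]
  -- bounding the second piece
  have hT2bound : |∫ ξ in S, F ξ * ((iprod n ξ ν - d) ^ A
      * ((B * v ξ * |v ξ| ^ (B - 2)) * fderiv ℝ v ξ (Zf n ν ξ)))|
      ≤ B * ∫ ξ in S, |u ξ| ^ (B - 1) * (iprod n ξ ν - d) ^ ((p - 1) / p) * hNorm n v ξ := by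
    have habs : |∫ ξ in S, F ξ * ((iprod n ξ ν - d) ^ A
        * ((B * v ξ * |v ξ| ^ (B - 2)) * fderiv ℝ v ξ (Zf n ν ξ)))|
        ≤ ∫ ξ in S, |F ξ * ((iprod n ξ ν - d) ^ A
            * ((B * v ξ * |v ξ| ^ (B - 2)) * fderiv ℝ v ξ (Zf n ν ξ)))| := by
      have h := norm_integral_le_integral_norm (μ := volume.restrict S)
          (fun ξ => F ξ * ((iprod n ξ ν - d) ^ A
            * ((B * v ξ * |v ξ| ^ (B - 2)) * fderiv ℝ v ξ (Zf n ν ξ))))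
      simp only [Real.norm_eq_abs] at h
      exact h
    refine le_trans habs ?_
    have hmono : ∫ ξ in S, |F ξ * ((iprod n ξ ν - d) ^ A
        * ((B * v ξ * |v ξ| ^ (B - 2)) * fderiv ℝ v ξ (Zf n ν ξ)))|
        ≤ ∫ ξ in S, B * (|u ξ| ^ (B - 1) * (iprod n ξ ν - d) ^ ((p - 1) / p) * hNorm n v ξ) := by
      apply setIntegral_mono_on hIT2.abs (hIJ.const_mul B) hSmeas
      intro ξ hξ
      have hδ := hδpos ξ hξ
      have hFnn : 0 ≤ F ξ := (hFpos ξ).le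
      have hδAnn : (0:ℝ) ≤ (iprod n ξ ν - d) ^ A := Real.rpow_nonneg hδ.le _
      have hcs := abs_fderiv_Zf_le ν v ξ
      have hNvnn : (0:ℝ) ≤ hNorm n v ξ := Real.sqrt_nonneg _
      have hvB1nn : (0:ℝ) ≤ |v ξ| ^ (B - 1) := Real.rpow_nonneg (abs_nonneg _) _
      calc |F ξ * ((iprod n ξ ν - d) ^ A
            * ((B * v ξ * |v ξ| ^ (B - 2)) * fderiv ℝ v ξ (Zf n ν ξ)))|
          = F ξ * ((iprod n ξ ν - d) ^ A
            * ((B * |v ξ| ^ (B - 1)) * |fderiv ℝ v ξ (Zf n ν ξ)|)) := by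
            rw [abs_mul, abs_mul, abs_mul, abs_of_nonneg hFnn, abs_of_nonneg hδAnn,
              abs_cv hB1]
        _ ≤ F ξ * ((iprod n ξ ν - d) ^ A
            * ((B * |v ξ| ^ (B - 1)) * (Real.sqrt (Nsq n ν ξ) * hNorm n v ξ))) := by
            apply mul_le_mul_of_nonneg_left _ hFnn
            apply mul_le_mul_of_nonneg_left _ hδAnn
            apply mul_le_mul_of_nonneg_left hcs
            positivity
        _ = (Real.sqrt (Nsq n ν ξ) * F ξ)
            * (B * (((iprod n ξ ν - d) ^ A * |v ξ| ^ (B - 1)) * hNorm n v ξ)) := by ring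
        _ ≤ 1 * (B * (((iprod n ξ ν - d) ^ A * |v ξ| ^ (B - 1)) * hNorm n v ξ)) := by
            apply mul_le_mul_of_nonneg_right
              (sqrt_mul_inv_sqrt_le_one (Nsq_nonneg ν ξ) hε)
            have h3 : (0:ℝ) ≤ (iprod n ξ ν - d) ^ A * |v ξ| ^ (B - 1) :=
              mul_nonneg hδAnn hvB1nn
            positivity
        _ = B * (|u ξ| ^ (B - 1) * (iprod n ξ ν - d) ^ ((p - 1) / p) * hNorm n v ξ) := by
            rw [one_mul, hI2 ξ hξ]; ring
    refine le_trans hmono (le_of_eq ?_)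
    rw [integral_const_mul]
  -- conclude the first piece bound
  have habstract : ∀ T J T2 : ℝ, 0 ≤ J → A * T + T2 = 0 → |T2| ≤ B * J
      → T ≤ (p / (p - 1)) * J := by
    intro T J T2 hJ hsum hbound
    have h1 : A * T ≤ B * J := by
      have h2 := neg_le_abs T2
      linarith
    have hBA : B = (p / (p - 1)) * A := by rw [hBdef]; field_simp
    rw [hBA] at h1
    have h3 : A * T ≤ A * ((p / (p - 1)) * J) := by linarith
    exact le_of_mul_le_mul_left h3 hA
  have hT1 : ∫ ξ in S, (iprod n ξ ν - d) ^ (A - 1) * (Nsq n ν ξ * F ξ) * |v ξ| ^ B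
      ≤ (p / (p - 1)) * ∫ ξ in S, |u ξ| ^ (B - 1) * (iprod n ξ ν - d) ^ ((p - 1) / p)
        * hNorm n v ξ :=
    habstract _ _ _ hJnn hsplit hT2bound
  -- final pointwise comparison and conclusion
  have hfinal : ∫ ξ in S, (iprod n ξ ν - d) ^ (A - 1) * Real.sqrt (Nsq n ν ξ) * |v ξ| ^ B
      ≤ (∫ ξ in S, (iprod n ξ ν - d) ^ (A - 1) * (Nsq n ν ξ * F ξ) * |v ξ| ^ B) + ε * CC := by
    have hmono : ∫ ξ in S, (iprod n ξ ν - d) ^ (A - 1) * Real.sqrt (Nsq n ν ξ) * |v ξ| ^ B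
        ≤ ∫ ξ in S, ((iprod n ξ ν - d) ^ (A - 1) * (Nsq n ν ξ * F ξ) * |v ξ| ^ B
          + ε * ((iprod n ξ ν - d) ^ (A - 1) * |v ξ| ^ B)) := by
      apply setIntegral_mono_on hImain (hIT1.add (hICC.const_mul ε)) hSmeas
      intro ξ hξ
      have hδ := hδpos ξ hξ
      have hwnn : (0:ℝ) ≤ (iprod n ξ ν - d) ^ (A - 1) * |v ξ| ^ B :=
        mul_nonneg (Real.rpow_nonneg hδ.le _) (Real.rpow_nonneg (abs_nonneg _) _)
      have hkey := sqrt_le_div_add (Nsq_nonneg ν ξ) hε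
      have := mul_le_mul_of_nonneg_left hkey hwnn
      calc (iprod n ξ ν - d) ^ (A - 1) * Real.sqrt (Nsq n ν ξ) * |v ξ| ^ B
          = ((iprod n ξ ν - d) ^ (A - 1) * |v ξ| ^ B) * Real.sqrt (Nsq n ν ξ) := by ring
        _ ≤ ((iprod n ξ ν - d) ^ (A - 1) * |v ξ| ^ B)
            * (Nsq n ν ξ * (Real.sqrt (Nsq n ν ξ + ε ^ 2))⁻¹ + ε) := this
        _ = (iprod n ξ ν - d) ^ (A - 1) * (Nsq n ν ξ * F ξ) * |v ξ| ^ B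
            + ε * ((iprod n ξ ν - d) ^ (A - 1) * |v ξ| ^ B) := by rw [hFdef]; ring
    refine le_trans hmono (le_of_eq ?_)
    rw [integral_add hIT1 (hICC.const_mul ε), integral_const_mul, hCCdef]
  have hεCC : ε * CC ≤ η := by
    rw [hεdef]
    rw [div_mul_eq_mul_div, div_le_iff₀ hCC1]
    nlinarith
  calc ∫ ξ in S, (iprod n ξ ν - d) ^ (A - 1) * Real.sqrt (Nsq n ν ξ) * |v ξ| ^ B
      ≤ (∫ ξ in S, (iprod n ξ ν - d) ^ (A - 1) * (Nsq n ν ξ * F ξ) * |v ξ| ^ B) + ε * CC :=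
        hfinal
    _ ≤ ((p / (p - 1)) * ∫ ξ in S, |u ξ| ^ (B - 1) * (iprod n ξ ν - d) ^ ((p - 1) / p)
          * hNorm n v ξ) + ε * CC := by linarith [hT1]
    _ ≤ ((p / (p - 1)) * ∫ ξ in S, |u ξ| ^ (B - 1) * (iprod n ξ ν - d) ^ ((p - 1) / p)
          * hNorm n v ξ) + η := by linarith [hεCC]
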